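/- arXiv:2209.14658 — 6 statements merged into one kernel-verified Lean document; each statement's English description precedes it below -/
import Mathlib

section
/- For every integer n ≥ 0 and every m ≥ 2, the m-th derivative of the Chebyshev polynomial T_n satisfies the identity (x²-1)·T_n^{(m)}(x) = (n² - Σ_{t=0}^{m-3}(2t+1))·T_n^{(m-2)}(x) - (2m-3)·x·T_n^{(m-1)}(x), where T_n^{(0)} = T_n and the empty sum (for m=2) is 0. -/
open Polynomial Polynomial.Chebyshev Finset

lemma cheb_ode (n : ℤ) :
    (X ^ 2 - 1) * derivative (derivative (T ℝ n)) =
      (n : ℝ[X]) ^ 2 * T ℝ n - X * derivative (T ℝ n) := by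
  have h1 : derivative (derivative (T ℝ n)) = (n : ℝ[X]) * derivative (U ℝ (n - 1)) := by
    rw [T_derivative_eq_U, derivative_mul, derivative_intCast, zero_mul, zero_add]
  have h2 := add_one_mul_T_eq_poly_in_U (R := ℝ) (n - 1)
  have h3 := T_derivative_eq_U (R := ℝ) n
  linear_combination (norm := (push_cast; ring_nf)) (X ^ 2 - 1) * h1 - (n : ℝ[X]) * h2 + X * h3

lemma cheb_aux (n : ℕ) (k : ℕ) :
    (X ^ 2 - 1) * derivative^[k + 2] (T ℝ n) =
      C ((n : ℝ) ^ 2 - ∑ t ∈ range k, (2 * (t : ℝ) + 1)) * derivative^[k] (T ℝ n)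
        - C (2 * (k : ℝ) + 1) * X * derivative^[k + 1] (T ℝ n) := by
  induction k with
  | zero =>
    have h := cheb_ode (n : ℤ)
    simp only [Function.iterate_succ_apply', Function.iterate_zero_apply, range_zero,
      sum_empty, sub_zero, Nat.cast_zero, mul_zero, zero_add, map_one, map_pow, C_1,
      C_eq_natCast]
    push_cast at h
    linear_combination h
  | succ k ih =>
    have h := congr_arg derivative ih
    simp only [derivative_sub, derivative_mul, derivative_C, derivative_X, derivative_X_pow,
      derivative_ofNat, derivative_one, zero_mul, mul_one, zero_add, add_zero, sub_zero,
      mul_zero, zero_sub, Nat.cast_ofNat, pow_one] at h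
    rw [sum_range_succ]
    push_cast
    simp only [Function.iterate_succ_apply', map_sub, map_add, map_mul, map_pow, map_one,
      map_ofNat, C_1] at *
    linear_combination h

/-- `(x²-1)·T_n^{(m)}(x) = (n² - Σ_{t=0}^{m-3}(2t+1))·T_n^{(m-2)}(x) - (2m-3)·x·T_n^{(m-1)}(x)`
as an identity of polynomials over ℝ, for every `n ≥ 0` and `m ≥ 2`. -/
theorem chebyshev_deriv_recurrence (n : ℕ) (m : ℕ) (hm : 2 ≤ m) :
    (X ^ 2 - 1) * derivative^[m] (T ℝ n) =
      C ((n : ℝ) ^ 2 - ∑ t ∈ range (m - 2), (2 * (t : ℝ) + 1)) * derivative^[m - 2] (T ℝ n)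
        - C (2 * (m : ℝ) - 3) * X * derivative^[m - 1] (T ℝ n) := by
  obtain ⟨k, rfl⟩ : ∃ k, m = k + 2 := ⟨m - 2, by omega⟩
  have h := cheb_aux n k
  have h1 : k + 2 - 2 = k := by omega
  have h2 : k + 2 - 1 = k + 1 := by omega
  have h3 : (2 * ((k : ℝ) + 2) - 3) = 2 * (k : ℝ) + 1 := by ring
  rw [h1, h2]
  push_cast
  rw [h3]
  linear_combination h
end

section
/- Let p > 3 be a prime, k ≥ 1, and n a positive integer with gcd(n, p) = gcd(n, p²-1) = 1. Then T_n((p^k+1)/2) ≡ (p^k+1)/2 (mod p^k) and T_n((p^k-1)/2) ≡ (p^k-1)/2 (mod p^k); also T_n(0) ≡ 0, T_n(1) ≡ 1, and T_n(p^k-1) ≡ p^k-1 (mod p^k). -/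
open Polynomial Polynomial.Chebyshev

private lemma evalT_step {R : Type*} [CommRing R] (c : R) (a b d : ℤ) (h1 : a = d + 2)
    (h2 : b = d + 1) :
    (T R a).eval c = 2 * c * (T R b).eval c - (T R d).eval c := by
  subst h1; subst h2; rw [T_add_two]; simp

private lemma evalT_period {R : Type*} [CommRing R] (c : R) (d : ℕ) (hd : 0 < d)
    (hper : ∀ m : ℤ, (T R (m + d)).eval c = (T R m).eval c) (n : ℕ) :
    (T R (n : ℤ)).eval c = (T R ((n % d : ℕ) : ℤ)).eval c := by
  induction n using Nat.strong_induction_on with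
  | _ n ih =>
    rcases lt_or_ge n d with h | h
    · rw [Nat.mod_eq_of_lt h]
    · have h2 : (n : ℤ) = ((n - d : ℕ) : ℤ) + d := by omega
      rw [Nat.mod_eq_sub_mod h, ← ih (n - d) (by omega), h2]
      exact hper _

private lemma evalT_one {R : Type*} [CommRing R] (n : ℕ) : (T R (n : ℤ)).eval 1 = 1 := by
  induction n using Nat.strong_induction_on with
  | _ n ih =>
    match n, ih with
    | 0, _ => simp [T_zero]
    | 1, _ => simp [T_one]
    | (m + 2), ih =>
      have i1 := ih (m + 1) (by omega)
      have i0 := ih m (by omega)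
      rw [show ((m + 1 : ℕ) : ℤ) = (m : ℤ) + 1 by push_cast; ring] at i1
      rw [show ((m + 2 : ℕ) : ℤ) = (m : ℤ) + 2 by push_cast; ring, T_add_two]
      simp only [eval_sub, eval_mul, eval_X, eval_ofNat, i1, i0]
      ring

private lemma evalT_neg_one {R : Type*} [CommRing R] (n : ℕ) :
    (T R (n : ℤ)).eval (-1) = (-1) ^ n := by
  induction n using Nat.strong_induction_on with
  | _ n ih =>
    match n, ih with
    | 0, _ => simp [T_zero]
    | 1, _ => simp [T_one]
    | (m + 2), ih =>
      have i1 := ih (m + 1) (by omega)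
      have i0 := ih m (by omega)
      rw [show ((m + 1 : ℕ) : ℤ) = (m : ℤ) + 1 by push_cast; ring] at i1
      rw [show ((m + 2 : ℕ) : ℤ) = (m : ℤ) + 2 by push_cast; ring, T_add_two]
      simp only [eval_sub, eval_mul, eval_X, eval_ofNat, i1, i0]
      ring

/-- For a prime `p > 3`, `k ≥ 1`, and `n` with `gcd(n,p)=gcd(n,p²-1)=1`, the Chebyshev
permutation polynomial `T_n` fixes `0`, `1`, `(p^k+1)/2`, `(p^k-1)/2` and `p^k-1`
modulo `p^k`. -/
theorem chebyshev_five_fixed_points (p k n : ℕ) (hp : p.Prime) (hp3 : 3 < p) (hk : 1 ≤ k)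
    (hn : 0 < n) (h1 : Nat.gcd n p = 1) (h2 : Nat.gcd n (p ^ 2 - 1) = 1) :
    (T ℤ n).eval 0 ≡ 0 [ZMOD p ^ k] ∧
    (T ℤ n).eval 1 ≡ 1 [ZMOD p ^ k] ∧
    (T ℤ n).eval (((p : ℤ) ^ k + 1) / 2) ≡ ((p : ℤ) ^ k + 1) / 2 [ZMOD p ^ k] ∧
    (T ℤ n).eval (((p : ℤ) ^ k - 1) / 2) ≡ ((p : ℤ) ^ k - 1) / 2 [ZMOD p ^ k] ∧
    (T ℤ n).eval ((p : ℤ) ^ k - 1) ≡ (p : ℤ) ^ k - 1 [ZMOD p ^ k] := by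
  set R := ZMod (p ^ k) with hR
  -- basic arithmetic facts
  have hpodd : Odd p := hp.odd_of_ne_two (by omega)
  have hpkodd : Odd (p ^ k) := hpodd.pow
  have hpkoddZ : Odd ((p : ℤ) ^ k) := by
    rw [show ((p : ℤ)) ^ k = ((p ^ k : ℕ) : ℤ) by push_cast; ring]
    exact_mod_cast hpkodd
  -- n is coprime to 6
  have hp2mod : p ^ 2 % 2 = 1 ∧ p ^ 2 % 3 = 1 := by
    constructor
    · have hp2 : p % 2 = 1 := Nat.odd_iff.mp hpodd
      rw [Nat.pow_mod, hp2]
    · have h3p : ¬ (3 ∣ p) := by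
        intro hd
        have := (Nat.prime_dvd_prime_iff_eq (by norm_num) hp).mp hd
        omega
      rw [Nat.pow_mod]
      have : p % 3 = 1 ∨ p % 3 = 2 := by omega
      rcases this with h | h <;> rw [h] <;> norm_num
  have hp2pos : 1 ≤ p ^ 2 := Nat.one_le_pow _ _ (by omega)
  have hdvd2 : 2 ∣ p ^ 2 - 1 := by omega
  have hdvd3 : 3 ∣ p ^ 2 - 1 := by omega
  have hn2 : n % 2 = 1 := by
    have hc : Nat.gcd n 2 = 1 := Nat.Coprime.coprime_dvd_right hdvd2 h2
    have : ¬ (2 ∣ n) := by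
      intro hd
      have := Nat.dvd_gcd hd (dvd_refl 2)
      omega
    omega
  have hn3 : ¬ (3 ∣ n) := by
    have hc : Nat.gcd n 3 = 1 := Nat.Coprime.coprime_dvd_right hdvd3 h2
    intro hd
    have := Nat.dvd_gcd hd (dvd_refl 3)
    omega
  -- conversion to ZMod (p^k)
  have hconv : ∀ a b : ℤ, ((a : R) = (b : R)) → a ≡ b [ZMOD (p : ℤ) ^ k] := by
    intro a b hab
    have := (ZMod.intCast_eq_intCast_iff a b (p ^ k)).mp hab
    simpa using this
  have cast_eval : ∀ x : ℤ, (((T ℤ (n : ℤ)).eval x : ℤ) : R) = (T R (n : ℤ)).eval ((x : R)) := by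
    intro x
    rw [← map_T (Int.castRingHom R) (n : ℤ), eval_intCast_map]
    rfl
  have hpk0 : ((p : R)) ^ k = 0 := by
    rw [← Nat.cast_pow]; exact ZMod.natCast_self _
  refine ⟨?_, ?_, ?_, ?_, ?_⟩
  · -- eval at 0
    apply hconv
    rw [cast_eval]
    push_cast
    have hper : ∀ m : ℤ, (T R (m + (4 : ℕ))).eval 0 = (T R m).eval 0 := by
      intro m
      have e2 := evalT_step (0 : R) (m + 2) (m + 1) m (by ring) (by ring)
      have e4 := evalT_step (0 : R) (m + 4) (m + 3) (m + 2) (by push_cast; ring) (by ring)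
      rw [show (m + ((4 : ℕ) : ℤ)) = m + 4 by push_cast; ring]
      rw [e4, e2]; ring
    rw [evalT_period (0 : R) 4 (by norm_num) hper n]
    have : n % 4 = 1 ∨ n % 4 = 3 := by omega
    rcases this with h | h <;> rw [h]
    · simp [T_one]
    · have e3 := evalT_step (0 : R) 3 2 1 (by norm_num) (by norm_num)
      rw [show ((3 : ℕ) : ℤ) = 3 by norm_num, e3]
      simp [T_one]
  · -- eval at 1
    apply hconv
    rw [cast_eval]
    push_cast
    exact evalT_one n
  · -- eval at (p^k+1)/2
    apply hconv
    rw [cast_eval]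
    set c : R := (((((p : ℤ) ^ k + 1) / 2) : ℤ) : R) with hc_def
    have hdvd : (2 : ℤ) ∣ (p : ℤ) ^ k + 1 := by
      obtain ⟨t, ht⟩ := hpkoddZ; exact ⟨t + 1, by omega⟩
    have hc : 2 * c = 1 := by
      have h2x : (2 : ℤ) * (((p : ℤ) ^ k + 1) / 2) = (p : ℤ) ^ k + 1 :=
        Int.mul_ediv_cancel' hdvd
      calc 2 * c = (((2 : ℤ) * (((p : ℤ) ^ k + 1) / 2) : ℤ) : R) := by rw [Int.cast_mul, Int.cast_ofNat, hc_def]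
        _ = (((p : ℤ) ^ k + 1 : ℤ) : R) := by rw [h2x]
        _ = 1 := by push_cast; rw [hpk0]; ring
    have hper : ∀ m : ℤ, (T R (m + (6 : ℕ))).eval c = (T R m).eval c := by
      intro m
      have e2 := evalT_step c (m + 2) (m + 1) m (by ring) (by ring)
      have e3 := evalT_step c (m + 3) (m + 2) (m + 1) (by ring) (by ring)
      have e5 := evalT_step c (m + 5) (m + 4) (m + 3) (by ring) (by ring)
      have e6 := evalT_step c (m + 6) (m + 5) (m + 4) (by ring) (by ring)
      rw [hc, one_mul] at e2 e3 e5 e6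
      rw [show (m + ((6 : ℕ) : ℤ)) = m + 6 by push_cast; ring]
      linear_combination e6 + e5 - e3 - e2
    rw [evalT_period c 6 (by norm_num) hper n]
    have : n % 6 = 1 ∨ n % 6 = 5 := by omega
    rcases this with h | h <;> rw [h]
    · simp [T_one]
    · have e2 := evalT_step c 2 1 0 (by norm_num) (by norm_num)
      have e3 := evalT_step c 3 2 1 (by norm_num) (by norm_num)
      have e4 := evalT_step c 4 3 2 (by norm_num) (by norm_num)
      have e5 := evalT_step c 5 4 3 (by norm_num) (by norm_num)
      rw [show ((5 : ℕ) : ℤ) = 5 by norm_num, e5, e4, e3, e2]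
      simp only [T_zero, T_one, eval_one, eval_X]
      linear_combination (8 * c ^ 4 + 4 * c ^ 3 - 8 * c ^ 2 - 4 * c) * hc
  · -- eval at (p^k-1)/2
    apply hconv
    rw [cast_eval]
    set c : R := (((((p : ℤ) ^ k - 1) / 2) : ℤ) : R) with hc_def
    have hdvd : (2 : ℤ) ∣ (p : ℤ) ^ k - 1 := by
      obtain ⟨t, ht⟩ := hpkoddZ; exact ⟨t, by omega⟩
    have hc : 2 * c = -1 := by
      have h2x : (2 : ℤ) * (((p : ℤ) ^ k - 1) / 2) = (p : ℤ) ^ k - 1 :=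
        Int.mul_ediv_cancel' hdvd
      calc 2 * c = (((2 : ℤ) * (((p : ℤ) ^ k - 1) / 2) : ℤ) : R) := by rw [Int.cast_mul, Int.cast_ofNat, hc_def]
        _ = (((p : ℤ) ^ k - 1 : ℤ) : R) := by rw [h2x]
        _ = -1 := by push_cast; rw [hpk0]; ring
    have hper : ∀ m : ℤ, (T R (m + (3 : ℕ))).eval c = (T R m).eval c := by
      intro m
      have e2 := evalT_step c (m + 2) (m + 1) m (by ring) (by ring)
      have e3 := evalT_step c (m + 3) (m + 2) (m + 1) (by ring) (by ring)
      rw [hc] at e2 e3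
      rw [show (m + ((3 : ℕ) : ℤ)) = m + 3 by push_cast; ring]
      rw [e3, e2]; ring
    rw [evalT_period c 3 (by norm_num) hper n]
    have : n % 3 = 1 ∨ n % 3 = 2 := by omega
    rcases this with h | h <;> rw [h]
    · simp [T_one]
    · have e2 := evalT_step c 2 1 0 (by norm_num) (by norm_num)
      rw [show ((2 : ℕ) : ℤ) = 2 by norm_num, e2]
      simp only [T_zero, T_one, eval_one, eval_X]
      linear_combination (c - 1) * hc
  · -- eval at p^k - 1
    apply hconv
    rw [cast_eval]
    have hm1 : (((p : ℤ) ^ k - 1 : ℤ) : R) = -1 := by push_cast; rw [hpk0]; ring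
    rw [hm1, evalT_neg_one n]
    have : Odd n := Nat.odd_iff.mpr hn2
    rw [this.neg_one_pow]
end

section
/- In the power series form T_n(x) = (n/2)·Σ_{m=0}^{⌊n/2⌋} (-1)^m ((n-m-1)!/(m!(n-2m)!))·(2x)^{n-2m}, the coefficient of x^{n-2m}, which equals (-1)^m·2^{n-2m-1}·(n/(n-m))·C(n-m, m), is an integer divisible by 2^{n-2m-1}; i.e., writing T_n(x) = Σ_i a_i x^i, one has 2^{i-1} ∣ a_i for every i ≥ 1. -/
open Polynomial Polynomial.Chebyshev

private lemma cheb_aux_s12 (n : ℕ) : ∀ i : ℕ, 1 ≤ i → (2 : ℤ) ^ (i - 1) ∣ (T ℤ n).coeff i := by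
  induction n using Nat.strong_induction_on with
  | _ n ih =>
    match n, ih with
    | 0, _ =>
      intro i hi
      simp [T_zero, Polynomial.coeff_one, Nat.pos_iff_ne_zero.mp hi]
    | 1, _ =>
      intro i hi
      have h1 : ((1 : ℕ) : ℤ) = 1 := by norm_num
      rw [h1, T_one, Polynomial.coeff_X]
      split <;> simp_all
    | (n + 2), ih =>
      intro i hi
      obtain ⟨j, rfl⟩ : ∃ j, i = j + 1 := ⟨i - 1, by omega⟩
      have h : T ℤ ((n : ℤ) + 2) = 2 * X * T ℤ (n + 1) - T ℤ n := T_add_two ℤ n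
      have hc : ((n + 2 : ℕ) : ℤ) = (n : ℤ) + 2 := by push_cast; ring
      rw [hc, h, Polynomial.coeff_sub, mul_assoc,
        show (2 : ℤ[X]) = C 2 from by norm_num, Polynomial.coeff_C_mul,
        Polynomial.coeff_X_mul]
      have hn : ((n + 1 : ℕ) : ℤ) = (n : ℤ) + 1 := by push_cast; ring
      have h2 : (2 : ℤ) ^ (j + 1 - 1) ∣ (T ℤ ((n : ℤ) + 1)).coeff j * 2 := by
        rcases Nat.eq_zero_or_pos j with hj | hj
        · simp [hj]
        · have := ih (n + 1) (by omega) j hj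
          rw [hn] at this
          obtain ⟨c, hcc⟩ := this
          exact ⟨c, by rw [hcc]; rw [show j + 1 - 1 = (j - 1) + 1 from by omega]; ring⟩
      have h3 : (2 : ℤ) ^ (j + 1 - 1) ∣ (T ℤ (n : ℤ)).coeff (j + 1) := by
        simpa using ih n (by omega) (j + 1) (by omega)
      exact dvd_sub (by rwa [mul_comm] at h2) h3

/-- Writing `T_n(x) = Σ aᵢ xⁱ`, the coefficient `aᵢ` is divisible by `2^{i-1}` for every
`i ≥ 1`. -/
theorem chebyshev_coeff_two_pow_dvd (n : ℕ) (i : ℕ) (hi : 1 ≤ i) :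
    (2 : ℤ) ^ (i - 1) ∣ (T ℤ n).coeff i :=
  cheb_aux_s12 n i hi
end

section
/- Let p > 3 be a prime, w ≥ 1, and let x be an integer with x mod p ∉ {0, 1, p-1} such that x ≡ (y + y⁻¹)/2 (mod p^w) for a unit y in the Galois ring GR(p^w, 2). Then T_n(x) ≡ x (mod p^w) if and only if y^{n-1} ≡ 1 (mod p^w) or y^{n+1} ≡ 1 (mod p^w). -/
open Polynomial Polynomial.Chebyshev
set_option maxHeartbeats 1000000

private lemma isUnit_intCast_zmod_pow {p : ℕ} (w : ℕ) (hp : p.Prime) {c : ℤ}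
    (hc : ¬ (p : ℤ) ∣ c) : IsUnit ((c : ZMod (p ^ w))) := by
  have hprime : Prime (p : ℤ) := Nat.prime_iff_prime_int.mp hp
  have hcop : IsCoprime ((p : ℤ) ^ w) c := (hprime.coprime_iff_not_dvd.mpr hc).pow_left
  obtain ⟨u, v, huv⟩ := hcop
  have hpw : (((p : ℤ) ^ w : ℤ) : ZMod (p ^ w)) = 0 := by
    have h0 : ((p ^ w : ℕ) : ZMod (p ^ w)) = 0 := ZMod.natCast_self _
    push_cast at h0 ⊢
    exact h0
  have h1 : ((v : ZMod (p ^ w)) * (c : ZMod (p ^ w))) = 1 := by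
    have h2 := congrArg (fun t : ℤ => (t : ZMod (p ^ w))) huv
    simp only [Int.cast_add, Int.cast_mul, Int.cast_one] at h2
    rw [hpw, mul_zero, zero_add] at h2
    exact h2
  exact IsUnit.of_mul_eq_one _ (by rw [mul_comm]; exact h1)

private lemma cheb_eval {R : Type*} [CommRing R] (A z zi : R) (hzzi : z * zi = 1)
    (hy : 2 * A = z + zi) : ∀ k : ℕ, 2 * ((T R k).eval A) = z ^ k + zi ^ k := by
  have key : ∀ k : ℕ, 2 * ((T R k).eval A) = z ^ k + zi ^ k ∧
      2 * ((T R (k + 1 : ℕ)).eval A) = z ^ (k + 1) + zi ^ (k + 1) := by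
    intro k
    induction k with
    | zero =>
      constructor
      · simp only [Nat.cast_zero, T_zero, eval_one, pow_zero, mul_one]; norm_num
      · simp only [Nat.cast_one, T_one, eval_X, pow_one, Nat.zero_add]; exact hy
    | succ k ih =>
      refine ⟨ih.2, ?_⟩
      have e0 := ih.1
      have e1 := ih.2
      have hcast1 : ((k + 1 : ℕ) : ℤ) = (k : ℤ) + 1 := by push_cast; ring
      have hcast2 : ((k + 1 + 1 : ℕ) : ℤ) = (k : ℤ) + 2 := by push_cast; ring
      rw [hcast1] at e1
      rw [hcast2, T_add_two]
      simp only [eval_sub, eval_mul, eval_ofNat, eval_X]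
      linear_combination (2 * ((T R ((k : ℤ) + 1)).eval A)) * hy + (z + zi) * e1 - e0
        + (z ^ k + zi ^ k) * hzzi
  exact fun k => (key k).1

noncomputable abbrev fwpoly (p w : ℕ) (x : ℤ) : (ZMod (p ^ w))[X] :=
  X ^ 2 - C (2 * (x : ZMod (p ^ w))) * X + 1

noncomputable abbrev fppoly (p : ℕ) (x : ℤ) : (ZMod p)[X] :=
  X ^ 2 - C (2 * (x : ZMod p)) * X + 1

private lemma map_fwpoly (p w : ℕ) (hw : w ≠ 0) (x : ℤ) :
    (fwpoly p w x).map (ZMod.castHom (dvd_pow_self p hw) (ZMod p)) = fppoly p x := by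
  simp only [fwpoly, fppoly, Polynomial.map_add, Polynomial.map_sub, Polynomial.map_mul,
    Polynomial.map_pow, Polynomial.map_X, Polynomial.map_one, Polynomial.map_C, map_mul, map_intCast,
    map_ofNat, Polynomial.map_ofNat, Polynomial.map_intCast]

noncomputable def phiAR (p w : ℕ) (hw : w ≠ 0) (x : ℤ) :
    AdjoinRoot (fwpoly p w x) →+* AdjoinRoot (fppoly p x) :=
  AdjoinRoot.lift
    ((AdjoinRoot.of (fppoly p x)).comp (ZMod.castHom (dvd_pow_self p hw) (ZMod p)))
    (AdjoinRoot.root (fppoly p x)) (by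
      rw [← Polynomial.eval₂_map, map_fwpoly p w hw x]
      exact AdjoinRoot.eval₂_root _)

private lemma phiAR_mk (p w : ℕ) (hw : w ≠ 0) (x : ℤ) (g : (ZMod (p ^ w))[X]) :
    phiAR p w hw x (AdjoinRoot.mk (fwpoly p w x) g)
      = AdjoinRoot.mk (fppoly p x) (g.map (ZMod.castHom (dvd_pow_self p hw) (ZMod p))) := by
  rw [phiAR, AdjoinRoot.lift_mk, ← Polynomial.eval₂_map, ← AdjoinRoot.algebraMap_eq,
    ← aeval_def, AdjoinRoot.aeval_eq]

private lemma castHom_surj (p w : ℕ) (hp : p.Prime) (hw : w ≠ 0) :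
    Function.Surjective (ZMod.castHom (dvd_pow_self p hw) (ZMod p)) := by
  haveI : NeZero p := ⟨hp.ne_zero⟩
  intro t
  refine ⟨((t.val : ℕ) : ZMod (p ^ w)), ?_⟩
  rw [map_natCast]
  exact ZMod.natCast_rightInverse t

private lemma phiAR_surj (p w : ℕ) (hp : p.Prime) (hw : w ≠ 0) (x : ℤ) :
    Function.Surjective (phiAR p w hw x) := by
  intro s
  obtain ⟨g, rfl⟩ := AdjoinRoot.mk_surjective s
  obtain ⟨g', hg'⟩ := Polynomial.map_surjective _ (castHom_surj p w hp hw) g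
  exact ⟨AdjoinRoot.mk _ g', by rw [phiAR_mk, hg']⟩

private lemma phiAR_ker_nil (p w : ℕ) (hp : p.Prime) (hw : w ≠ 0) (x : ℤ)
    (z : AdjoinRoot (fwpoly p w x)) (hz : phiAR p w hw x z = 0) : IsNilpotent z := by
  haveI : NeZero (p ^ w) := ⟨pow_ne_zero w hp.ne_zero⟩
  obtain ⟨g, rfl⟩ := AdjoinRoot.mk_surjective z
  rw [phiAR_mk, AdjoinRoot.mk_eq_zero] at hz
  obtain ⟨q', hq'⟩ := hz
  obtain ⟨q, rfl⟩ := Polynomial.map_surjective _ (castHom_surj p w hp hw) q'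
  have hker : (g - fwpoly p w x * q).map (ZMod.castHom (dvd_pow_self p hw) (ZMod p)) = 0 := by
    rw [Polynomial.map_sub, Polynomial.map_mul, map_fwpoly p w hw x, hq']
    ring
  have hdvd : C ((p : ℕ) : ZMod (p ^ w)) ∣ (g - fwpoly p w x * q) := by
    rw [Polynomial.C_dvd_iff_dvd_coeff]
    intro i
    have hc : (ZMod.castHom (dvd_pow_self p hw) (ZMod p)) ((g - fwpoly p w x * q).coeff i) = 0 := by
      rw [← Polynomial.coeff_map, hker, Polynomial.coeff_zero]
    set c := (g - fwpoly p w x * q).coeff i with hcdef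
    have hval : ((c.val : ℕ) : ZMod (p ^ w)) = c := ZMod.natCast_rightInverse c
    have h0 : ((c.val : ℕ) : ZMod p) = 0 := by rw [← map_natCast (ZMod.castHom (dvd_pow_self p hw) (ZMod p)), hval]; exact hc
    obtain ⟨t, ht⟩ := (ZMod.natCast_eq_zero_iff _ _).mp h0
    refine ⟨((t : ℕ) : ZMod (p ^ w)), ?_⟩
    rw [← hval, ht]
    push_cast
    ring
  obtain ⟨h, hh⟩ := hdvd
  have hzeq : AdjoinRoot.mk (fwpoly p w x) g
      = ((p : ℕ) : AdjoinRoot (fwpoly p w x)) * AdjoinRoot.mk (fwpoly p w x) h := by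
    have hg : g = fwpoly p w x * q + C ((p : ℕ) : ZMod (p ^ w)) * h := by rw [← hh]; ring
    rw [hg, map_add, map_mul, AdjoinRoot.mk_self, zero_mul, zero_add, map_mul,
      AdjoinRoot.mk_C, map_natCast]
  have hp0 : (((p : ℕ) : AdjoinRoot (fwpoly p w x))) ^ w = 0 := by
    rw [← Nat.cast_pow, ← map_natCast (AdjoinRoot.of (fwpoly p w x)) (p ^ w),
      ZMod.natCast_self, map_zero]
  exact ⟨w, by rw [hzeq, mul_pow, hp0, zero_mul]⟩

private lemma resfield_pow_eq_one (p w : ℕ) (hp : p.Prime) (hw : w ≠ 0) (x : ℤ)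
    (z : AdjoinRoot (fwpoly p w x))
    (hzq : z * z - 2 * ((x : ℤ) : AdjoinRoot (fwpoly p w x)) * z + 1 = 0)
    (r : ZMod p) (hr : r * r - 2 * (x : ZMod p) * r + 1 = 0)
    (m : Ideal (AdjoinRoot (fwpoly p w x))) (hm : m.IsMaximal) (k : ℕ)
    (hzk : z ^ k - 1 ∈ m) : r ^ k = 1 := by
  haveI := hm
  haveI : Fact p.Prime := ⟨hp⟩
  haveI := hm.isPrime
  have hpw0 : ((p ^ w : ℕ) : AdjoinRoot (fwpoly p w x)) = 0 := by
    rw [← map_natCast (AdjoinRoot.of (fwpoly p w x)) (p ^ w), ZMod.natCast_self, map_zero]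
  have hpK : ((p : ℕ) : AdjoinRoot (fwpoly p w x) ⧸ m) = 0 := by
    have h1 : (((p : ℕ) : AdjoinRoot (fwpoly p w x) ⧸ m)) ^ w = 0 := by
      rw [← map_natCast (Ideal.Quotient.mk m) p, ← map_pow, ← Nat.cast_pow, hpw0, map_zero]
    exact (pow_eq_zero_iff hw).mp h1
  haveI : CharP (AdjoinRoot (fwpoly p w x) ⧸ m) p :=
    (CharP.charP_iff_prime_eq_zero hp).mpr hpK
  have hinj : Function.Injective
      (ZMod.castHom (dvd_refl p) (AdjoinRoot (fwpoly p w x) ⧸ m)) :=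
    (ZMod.castHom (dvd_refl p) (AdjoinRoot (fwpoly p w x) ⧸ m)).injective
  have hπz : (Ideal.Quotient.mk m) z * (Ideal.Quotient.mk m) z
      - 2 * ((x : ℤ) : AdjoinRoot (fwpoly p w x) ⧸ m) * (Ideal.Quotient.mk m) z + 1 = 0 := by
    have h0 := congrArg (Ideal.Quotient.mk m) hzq
    simpa only [map_add, map_sub, map_mul, map_one, map_zero, map_ofNat, map_intCast] using h0
  have hrK : (ZMod.castHom (dvd_refl p) (AdjoinRoot (fwpoly p w x) ⧸ m)) r
        * (ZMod.castHom (dvd_refl p) (AdjoinRoot (fwpoly p w x) ⧸ m)) r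
      - 2 * ((x : ℤ) : AdjoinRoot (fwpoly p w x) ⧸ m)
        * (ZMod.castHom (dvd_refl p) (AdjoinRoot (fwpoly p w x) ⧸ m)) r + 1 = 0 := by
    have h0 := congrArg (ZMod.castHom (dvd_refl p) (AdjoinRoot (fwpoly p w x) ⧸ m)) hr
    simpa only [map_add, map_sub, map_mul, map_one, map_zero, map_ofNat, map_intCast] using h0
  have hfac : ((Ideal.Quotient.mk m) z
        - (ZMod.castHom (dvd_refl p) (AdjoinRoot (fwpoly p w x) ⧸ m)) r)
      * ((Ideal.Quotient.mk m) z
        - (ZMod.castHom (dvd_refl p) (AdjoinRoot (fwpoly p w x) ⧸ m)) (2 * (x : ZMod p) - r))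
      = 0 := by
    have hs : (ZMod.castHom (dvd_refl p) (AdjoinRoot (fwpoly p w x) ⧸ m)) (2 * (x : ZMod p) - r)
        = 2 * ((x : ℤ) : AdjoinRoot (fwpoly p w x) ⧸ m)
          - (ZMod.castHom (dvd_refl p) (AdjoinRoot (fwpoly p w x) ⧸ m)) r := by
      simp only [map_sub, map_mul, map_intCast, map_ofNat]
    rw [hs]
    linear_combination hπz - hrK
  have hπzk : ((Ideal.Quotient.mk m) z) ^ k = 1 := by
    have h0 : (Ideal.Quotient.mk m) (z ^ k - 1) = 0 := Ideal.Quotient.eq_zero_iff_mem.mpr hzk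
    have h1 : ((Ideal.Quotient.mk m) z) ^ k - 1 = 0 := by
      simpa only [map_sub, map_one, map_pow] using h0
    linear_combination h1
  rcases mul_eq_zero.mp hfac with h1 | h1
  · have h2 := sub_eq_zero.mp h1
    apply hinj
    rw [map_pow, ← h2, hπzk, map_one]
  · have h2 := sub_eq_zero.mp h1
    have hsk : (2 * (x : ZMod p) - r) ^ k = 1 := by
      apply hinj
      rw [map_pow, ← h2, hπzk, map_one]
    have hrs : r * (2 * (x : ZMod p) - r) = 1 := by linear_combination -hr
    calc r ^ k = r ^ k * ((2 * (x : ZMod p) - r) ^ k) := by rw [hsk, mul_one]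
    _ = (r * (2 * (x : ZMod p) - r)) ^ k := (mul_pow _ _ _).symm
    _ = 1 := by rw [hrs, one_pow]

private lemma key_lemma (p w n : ℕ) (hp : p.Prime) (hp3 : 3 < p) (hw : 1 ≤ w) (hn : 1 ≤ n)
    (x : ℤ) (hx1 : ¬ x ≡ 1 [ZMOD (p : ℕ)]) (hxm1 : ¬ x ≡ -1 [ZMOD (p : ℕ)])
    (z : AdjoinRoot (fwpoly p w x))
    (hzq : z * z - 2 * ((x : ℤ) : AdjoinRoot (fwpoly p w x)) * z + 1 = 0)
    (hzu : IsUnit (z * z - 1))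
    (h : (z ^ (n - 1) - 1) * (z ^ (n + 1) - 1) = 0) :
    z ^ (n - 1) = 1 ∨ z ^ (n + 1) = 1 := by
  haveI : Fact p.Prime := ⟨hp⟩
  by_contra hcon
  push_neg at hcon
  obtain ⟨hc1, hc2⟩ := hcon
  have ha0 : z ^ (n - 1) - 1 ≠ 0 := sub_ne_zero.mpr hc1
  have hb0 : z ^ (n + 1) - 1 ≠ 0 := sub_ne_zero.mpr hc2
  have hba : (z ^ (n + 1) - 1) - z * z * (z ^ (n - 1) - 1) = z * z - 1 := by
    have hpow : z ^ (n + 1) = z * z * z ^ (n - 1) := by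
      have he : n + 1 = (n - 1) + 2 := by omega
      rw [he, pow_add]; ring
    rw [hpow]; ring
  have hanu : (z ^ (n - 1) - 1) ∈ nonunits (AdjoinRoot (fwpoly p w x)) := by
    rw [mem_nonunits_iff]
    intro hu
    exact hb0 ((hu.mul_right_eq_zero).mp h)
  have hbnu : (z ^ (n + 1) - 1) ∈ nonunits (AdjoinRoot (fwpoly p w x)) := by
    rw [mem_nonunits_iff]
    intro hu
    exact ha0 ((hu.mul_left_eq_zero).mp h)
  obtain ⟨m₁, hm₁, ham⟩ := exists_max_ideal_of_mem_nonunits hanu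
  obtain ⟨m₂, hm₂, hbm⟩ := exists_max_ideal_of_mem_nonunits hbnu
  have hw' : w ≠ 0 := by omega
  by_cases hroot : ∃ r : ZMod p, r * r - 2 * (x : ZMod p) * r + 1 = 0
  · obtain ⟨r, hr⟩ := hroot
    have h1 : r ^ (n - 1) = 1 := resfield_pow_eq_one p w hp hw' x z hzq r hr m₁ hm₁ _ ham
    have h2 : r ^ (n + 1) = 1 := resfield_pow_eq_one p w hp hw' x z hzq r hr m₂ hm₂ _ hbm
    have hrs : r * (2 * (x : ZMod p) - r) = 1 := by linear_combination -hr
    have hr0 : r ≠ 0 := left_ne_zero_of_mul_eq_one hrs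
    have hr2 : r ^ 2 = 1 := by
      have e : r ^ (n + 1) = r ^ (n - 1) * r ^ 2 := by
        rw [← pow_add]
        congr 1
        omega
      rw [h1, one_mul] at e
      rw [← e, h2]
    have hfac2 : (r - 1) * (r + 1) = 0 := by linear_combination hr2
    have h20 : (2 : ZMod p) ≠ 0 := by
      have h2z : ((2 : ℤ) : ZMod p) ≠ 0 := by
        rw [Ne, ZMod.intCast_zmod_eq_zero_iff_dvd]
        intro hdvd
        have := Int.le_of_dvd (by norm_num) hdvd
        omega
      simpa using h2z
    rcases mul_eq_zero.mp hfac2 with h3 | h3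
    · have hre : r = 1 := by linear_combination h3
      rw [hre] at hr
      have h2x : (2 : ZMod p) * (1 - (x : ZMod p)) = 0 := by linear_combination hr
      have hxe : (1 : ZMod p) - (x : ZMod p) = 0 := by
        rcases mul_eq_zero.mp h2x with hh | hh
        · exact absurd hh h20
        · exact hh
      apply hx1
      have : ((x : ℤ) : ZMod p) = ((1 : ℤ) : ZMod p) := by push_cast; linear_combination -hxe
      exact (ZMod.intCast_eq_intCast_iff _ _ _).mp this
    · have hre : r = -1 := by linear_combination h3
      rw [hre] at hr
      have h2x : (2 : ZMod p) * (1 + (x : ZMod p)) = 0 := by linear_combination hr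
      have hxe : (1 : ZMod p) + (x : ZMod p) = 0 := by
        rcases mul_eq_zero.mp h2x with hh | hh
        · exact absurd hh h20
        · exact hh
      apply hxm1
      have : ((x : ℤ) : ZMod p) = ((-1 : ℤ) : ZMod p) := by push_cast; linear_combination hxe
      exact (ZMod.intCast_eq_intCast_iff _ _ _).mp this
  · push_neg at hroot
    haveI : Fact (Irreducible (fppoly p x)) := ⟨by
      have heq : fppoly p x = C (1 : ZMod p) * X ^ 2 + C (-(2 * (x : ZMod p))) * X + C 1 := by
        simp only [fppoly, map_one, map_neg, one_mul]
        ring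
      have hdeg : (fppoly p x).natDegree = 2 := by
        rw [heq, natDegree_quadratic one_ne_zero]
      rw [irreducible_iff_roots_eq_zero_of_degree_le_three (by omega) (by omega)]
      by_contra hne
      obtain ⟨r, hrmem⟩ := Multiset.exists_mem_of_ne_zero hne
      have hfp0 : fppoly p x ≠ 0 := fun hh => by simp [hh] at hdeg
      rw [mem_roots hfp0] at hrmem
      have hev := hrmem
      have heval : r * r - 2 * (x : ZMod p) * r + 1 = 0 := by
        simp only [IsRoot, fppoly, eval_add, eval_sub, eval_mul, eval_pow, eval_X, eval_C,
          eval_one] at hev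
        linear_combination hev
      exact (hroot r) heval⟩
    have hsurj := phiAR_surj p w hp hw' x
    have hkm := RingHom.ker_isMaximal_of_surjective (phiAR p w hw' x) hsurj
    have hle : ∀ (m : Ideal (AdjoinRoot (fwpoly p w x))), m.IsMaximal
        → RingHom.ker (phiAR p w hw' x) = m := by
      intro m hm
      refine hkm.eq_of_le hm.ne_top ?_
      intro zz hzz
      obtain ⟨k, hk⟩ := phiAR_ker_nil p w hp hw' x zz (RingHom.mem_ker.mp hzz)
      exact hm.isPrime.mem_of_pow_mem k (by rw [hk]; exact m.zero_mem)
    have hm12 : m₁ = m₂ := by rw [← hle m₁ hm₁, ← hle m₂ hm₂]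
    have hmem : z * z - 1 ∈ m₁ := by
      rw [← hba]
      exact Ideal.sub_mem _ (hm12 ▸ hbm) (Ideal.mul_mem_left _ _ ham)
    exact hm₁.ne_top (Ideal.eq_top_of_isUnit_mem _ hmem hzu)

/-- Let `p > 3` be prime, `w ≥ 1`, and `x` an integer with `x mod p ∉ {0, 1, p-1}`.
In the Galois ring `GR(p^w, 2) = ℤ_{p^w}[t]/(t² - 2xt + 1)`, if `y` is a unit with
`x = (y + y⁻¹)/2`, then `T_n(x) = x` holds in the ring (i.e. `T_n(x) ≡ x (mod p^w)`)
if and only if `y^{n-1} = 1` or `y^{n+1} = 1`. -/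
theorem chebyshev_fixed_iff_unit_pow (p w n : ℕ) (hp : p.Prime) (hp3 : 3 < p) (hw : 1 ≤ w)
    (hn : 1 ≤ n) (x : ℤ)
    (hx0 : ¬ x ≡ 0 [ZMOD p]) (hx1 : ¬ x ≡ 1 [ZMOD p]) (hxm1 : ¬ x ≡ -1 [ZMOD p])
    (y : (AdjoinRoot (X ^ 2 - C (2 * (x : ZMod (p ^ w))) * X + 1 : (ZMod (p ^ w))[X]))ˣ)
    (hy : 2 * algebraMap (ZMod (p ^ w))
        (AdjoinRoot (X ^ 2 - C (2 * (x : ZMod (p ^ w))) * X + 1 : (ZMod (p ^ w))[X]))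
        (x : ZMod (p ^ w)) = (y : AdjoinRoot _) + ((y⁻¹ : _ˣ) : AdjoinRoot _)) :
    (T (AdjoinRoot (X ^ 2 - C (2 * (x : ZMod (p ^ w))) * X + 1 : (ZMod (p ^ w))[X])) n).eval
        (algebraMap (ZMod (p ^ w))
          (AdjoinRoot (X ^ 2 - C (2 * (x : ZMod (p ^ w))) * X + 1 : (ZMod (p ^ w))[X]))
          (x : ZMod (p ^ w))) =
      algebraMap (ZMod (p ^ w))
        (AdjoinRoot (X ^ 2 - C (2 * (x : ZMod (p ^ w))) * X + 1 : (ZMod (p ^ w))[X]))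
        (x : ZMod (p ^ w)) ↔
    ((y : AdjoinRoot (X ^ 2 - C (2 * (x : ZMod (p ^ w))) * X + 1 : (ZMod (p ^ w))[X]))
        ^ (n - 1) = 1 ∨
      (y : AdjoinRoot (X ^ 2 - C (2 * (x : ZMod (p ^ w))) * X + 1 : (ZMod (p ^ w))[X]))
        ^ (n + 1) = 1) := by
  haveI : Fact p.Prime := ⟨hp⟩
  set R := AdjoinRoot (X ^ 2 - C (2 * (x : ZMod (p ^ w))) * X + 1 : (ZMod (p ^ w))[X]) with hRdef
  set z : R := (y : R) with hzdef
  set zi : R := ((y⁻¹ : Rˣ) : R) with hzidef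
  have hzzi : z * zi = 1 := Units.mul_inv y
  set A := algebraMap (ZMod (p ^ w)) R ((x : ZMod (p ^ w))) with hAdef
  have hA : A = ((x : ℤ) : R) := map_intCast (algebraMap (ZMod (p ^ w)) R) x
  have hcheb := cheb_eval A z zi hzzi hy
  have h2 : IsUnit (2 : R) := by
    have h2' : IsUnit ((2 : ℤ) : ZMod (p ^ w)) := by
      apply isUnit_intCast_zmod_pow w hp
      intro hd
      have := Int.le_of_dvd (by norm_num) hd
      omega
    have h2'' : IsUnit (2 : ZMod (p ^ w)) := by
      rwa [show ((2 : ℤ) : ZMod (p ^ w)) = (2 : ZMod (p ^ w)) by norm_cast] at h2'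
    have h2m := h2''.map (algebraMap (ZMod (p ^ w)) R)
    rwa [map_ofNat] at h2m
  obtain ⟨m, rfl⟩ : ∃ m, n = m + 1 := ⟨n - 1, by omega⟩
  simp only [Nat.add_sub_cancel]
  have hzn : IsUnit (z ^ (m + 1)) := ⟨y ^ (m + 1), by rw [Units.val_pow_eq_pow_val]⟩
  have step1 : ((T R ((m + 1 : ℕ))).eval A = A) ↔ (z ^ (m + 1) + zi ^ (m + 1) = z + zi) := by
    rw [← h2.mul_right_inj, hcheb (m + 1), hy]
  have hzzim : z ^ m * zi ^ m = 1 := by rw [← mul_pow, hzzi, one_pow]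
  have hprodid : (z ^ (m + 1) + zi ^ (m + 1)) * z ^ (m + 1) - (z + zi) * z ^ (m + 1)
      = (z ^ m - 1) * (z ^ (m + 1 + 1) - 1) := by
    linear_combination (z ^ m * zi ^ m - z ^ m) * hzzi + hzzim
  have step2 : (z ^ (m + 1) + zi ^ (m + 1) = z + zi)
      ↔ ((z ^ m - 1) * (z ^ (m + 1 + 1) - 1) = 0) := by
    rw [← hzn.mul_left_inj, ← sub_eq_zero, hprodid]
  rw [step1, step2]
  constructor
  · intro hprod
    have hzq : z * z - 2 * ((x : ℤ) : R) * z + 1 = 0 := by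
      rw [← hA]
      linear_combination (-z) * hy - hzzi
    have hzu : IsUnit (z * z - 1) := by
      have hy' : 2 * ((x : ℤ) : R) = z + zi := by rw [← hA]; exact hy
      have hprod4 : (z * z - 1) * (zi * zi - 1) = ((4 - 4 * x ^ 2 : ℤ) : R) := by
        push_cast
        linear_combination (2 * ((x : ℤ) : R) + z + zi) * hy' + (z * zi + 3) * hzzi
      have hu4 : IsUnit ((4 - 4 * x ^ 2 : ℤ) : ZMod (p ^ w)) := by
        apply isUnit_intCast_zmod_pow w hp
        intro hd
        have hfac : (4 - 4 * x ^ 2 : ℤ) = 4 * ((1 - x) * (1 + x)) := by ring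
        rw [hfac] at hd
        have hp' : Prime (p : ℤ) := Nat.prime_iff_prime_int.mp hp
        rcases hp'.dvd_mul.mp hd with h4 | h1x
        · have hle := Int.le_of_dvd (by norm_num) h4
          have hp4 : p = 4 := by omega
          rw [hp4] at hp
          norm_num at hp
        · rcases hp'.dvd_mul.mp h1x with hh | hh
          · exact hx1 ((Int.modEq_iff_dvd).mpr hh)
          · apply hxm1
            rw [Int.modEq_iff_dvd]
            have : (-1 - x : ℤ) = -(1 + x) := by ring
            rw [this]
            exact dvd_neg.mpr hh
      have humap : IsUnit (((4 - 4 * x ^ 2 : ℤ) : R)) := by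
        have hm4 := hu4.map (algebraMap (ZMod (p ^ w)) R)
        rwa [map_intCast] at hm4
      rw [← hprod4] at humap
      exact isUnit_of_mul_isUnit_left humap
    have hkey := key_lemma p w (m + 1) hp hp3 hw (by omega) x hx1 hxm1 z hzq hzu
      (by simpa [Nat.add_sub_cancel] using hprod)
    simpa [Nat.add_sub_cancel] using hkey
  · rintro (h1 | h1) <;> simp [h1]
end

section
/- Let p > 3 be prime, w ≥ 1, and x ∈ {0, 1, ..., p-1} \ {1, p-1} an integer with T_n(x) ≡ x (mod p^w), where n satisfies gcd(n,p)=gcd(n,p²-1)=1. Then T_n'(x) ≡ n (mod p^w) or T_n'(x) ≡ -n (mod p^w). -/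
open Polynomial Polynomial.Chebyshev

lemma pell (n : ℤ) : (T ℤ n)^2 - (X^2 - 1) * (U ℤ (n-1))^2 = 1 := by
  have hstep : ∀ m : ℤ, (T ℤ (m+1))^2 - (X^2 - 1) * (U ℤ m)^2
      = (T ℤ m)^2 - (X^2 - 1) * (U ℤ (m-1))^2 := by
    intro m
    have h₁ : T ℤ (m+1) = X * T ℤ m - (1 - X^2) * U ℤ (m-1) := by
      linear_combination (norm := ring_nf) T_eq_X_mul_T_sub_pol_U ℤ (m-1)
    have h₂ : U ℤ m = X * U ℤ (m-1) + T ℤ m := by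
      linear_combination (norm := ring_nf) U_eq_X_mul_U_add_T ℤ (m-1)
    rw [h₁, h₂]; ring
  induction n using Polynomial.Chebyshev.induct with
  | zero => simp
  | one => norm_num
  | add_two k ih1 ih2 => linear_combination (norm := ring_nf) hstep (k+1) + ih1
  | neg_add_one k ih1 ih2 => linear_combination (norm := ring_nf) ih1 - hstep (-k-1)


/-- For a prime `p > 3`, `w ≥ 1`, `n` with `gcd(n,p)=gcd(n,p²-1)=1`, and
`x ∈ {0,…,p-1} \ {1, p-1}` with `T_n(x) ≡ x (mod p^w)`, one has
`T_n'(x) ≡ n (mod p^w)` or `T_n'(x) ≡ -n (mod p^w)`. -/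

theorem chebyshev_deriv_pm_n (p w n : ℕ) (hp : p.Prime) (hp3 : 3 < p) (hw : 1 ≤ w)
    (hn : 0 < n) (h1 : Nat.gcd n p = 1) (h2 : Nat.gcd n (p ^ 2 - 1) = 1)
    (x : ℤ) (hx0 : 0 ≤ x) (hxp : x < p) (hx1 : x ≠ 1) (hxp1 : x ≠ (p : ℤ) - 1)
    (hfix : (T ℤ n).eval x ≡ x [ZMOD p ^ w]) :
    (derivative (T ℤ n)).eval x ≡ (n : ℤ) [ZMOD p ^ w] ∨
    (derivative (T ℤ n)).eval x ≡ -(n : ℤ) [ZMOD p ^ w] := by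

  set D := (derivative (T ℤ n)).eval x with hD
  set Tx := (T ℤ n).eval x with hTx
  have hpZ : Prime (p : ℤ) := Nat.prime_iff_prime_int.mp hp
  -- polynomial identity evaluated at x
  have hid : (X^2 - 1 : ℤ[X]) * (derivative (T ℤ n))^2
      = ((n : ℤ[X]))^2 * ((T ℤ n)^2 - 1) := by
    rw [T_derivative_eq_U]
    linear_combination (norm := (push_cast; ring)) (-((n : ℤ) : ℤ[X])^2) * pell (n : ℤ)
  have key : (x^2 - 1) * D^2 = (n:ℤ)^2 * (Tx^2 - 1) := by
    have := congrArg (Polynomial.eval x) hid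
    simpa [hD, hTx] using this
  -- congruence: (x²-1) * D² ≡ (x²-1) * n²  [mod p^w]
  have hcong : (x^2 - 1) * D^2 ≡ (x^2 - 1) * (n:ℤ)^2 [ZMOD p ^ w] := by
    calc (x^2 - 1) * D^2 = (n:ℤ)^2 * (Tx^2 - 1) := key
    _ ≡ (n:ℤ)^2 * (x^2 - 1) [ZMOD p ^ w] :=
        Int.ModEq.mul_left _ (Int.ModEq.sub (hfix.pow 2) (Int.ModEq.refl 1))
    _ = (x^2 - 1) * (n:ℤ)^2 := by ring
  have hdvd : ((p:ℤ)^w) ∣ (x^2 - 1) * (D^2 - (n:ℤ)^2) := by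
    have h := hcong.dvd
    have e : (x^2 - 1) * (D^2 - (n:ℤ)^2)
        = -((x^2 - 1) * (n:ℤ)^2 - (x^2 - 1) * D^2) := by ring
    rw [e]
    exact dvd_neg.mpr h
  -- p does not divide x² - 1
  have hple : (2:ℤ) ≤ (p:ℤ) := by exact_mod_cast hp.two_le
  have hpx : ¬ (p:ℤ) ∣ (x^2 - 1) := by
    have hfac : x^2 - 1 = (x - 1) * (x + 1) := by ring
    rw [hfac]
    intro hdd
    rcases hpZ.dvd_mul.mp hdd with hd | hd
    · have := Int.eq_zero_of_abs_lt_dvd hd (by rw [abs_lt]; omega)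
      omega
    · have := Int.eq_zero_of_abs_lt_dvd hd (by rw [abs_lt]; omega)
      omega
  have hcop : IsCoprime ((p:ℤ)^w) (x^2 - 1) :=
    (IsCoprime.pow_left ((hpZ.coprime_iff_not_dvd).mpr hpx))
  have hdvd2 : ((p:ℤ)^w) ∣ (D^2 - (n:ℤ)^2) := hcop.dvd_of_dvd_mul_left hdvd
  have hdvd3 : ((p:ℤ)^w) ∣ (D - n) * (D + n) := by
    have e : (D - n) * (D + n) = D^2 - (n:ℤ)^2 := by ring
    rwa [e]
  -- p cannot divide both D - n and D + n
  have hnot : ¬ ((p:ℤ) ∣ (D - n) ∧ (p:ℤ) ∣ (D + n)) := by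
    rintro ⟨ha, hb⟩
    have h2n : (p:ℤ) ∣ 2 * n := by
      have h := dvd_sub hb ha
      have e : (D + n) - (D - n) = 2 * (n:ℤ) := by ring
      rwa [e] at h
    rcases hpZ.dvd_mul.mp h2n with hd | hd
    · have := Int.le_of_dvd (by norm_num) hd
      omega
    · have hpn : p ∣ n := Int.natCast_dvd_natCast.mp hd
      have : p ∣ Nat.gcd n p := Nat.dvd_gcd hpn dvd_rfl
      rw [h1] at this
      have := Nat.le_of_dvd one_pos this
      omega
  by_cases hc : (p:ℤ) ∣ (D - n)
  · -- then p ∤ D + n, so p^w ∣ D - n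
    have hb : ¬ (p:ℤ) ∣ (D + n) := fun hb => hnot ⟨hc, hb⟩
    have hcop2 : IsCoprime ((p:ℤ)^w) (D + n) :=
      (IsCoprime.pow_left ((hpZ.coprime_iff_not_dvd).mpr hb))
    have : ((p:ℤ)^w) ∣ (D - n) := hcop2.dvd_of_dvd_mul_right hdvd3
    left
    exact Int.modEq_iff_dvd.mpr (by rw [show (n:ℤ) - D = -(D - n) by ring]; exact dvd_neg.mpr this)
  · have hcop2 : IsCoprime ((p:ℤ)^w) (D - n) :=
      (IsCoprime.pow_left ((hpZ.coprime_iff_not_dvd).mpr hc))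
    have : ((p:ℤ)^w) ∣ (D + n) := hcop2.dvd_of_dvd_mul_left hdvd3
    right
    exact Int.modEq_iff_dvd.mpr (by rw [show -(n:ℤ) - D = -(D + n) by ring]; exact dvd_neg.mpr this)
end

section
/- Let p be a prime, N, w positive integers, and x an integer such that T_n^N(x) ≡ x (mod p^w) (iteration of T_n modulo p^w returns to x after N steps). Then for every positive integer i, the derivative of the i·N-fold iterate satisfies (T_n^{i·N})'(x) ≡ (T_{n^N}'(x))^i (mod p). -/
open Polynomial Polynomial.Chebyshev

lemma eval_modeq_of_modeq {m a b : ℤ} (P : Polynomial ℤ) (hab : a ≡ b [ZMOD m]) :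
    P.eval a ≡ P.eval b [ZMOD m] := by
  have := Polynomial.sub_dvd_eval_sub a b P
  have hd : m ∣ a - b := Int.ModEq.dvd hab.symm
  exact (Int.modEq_iff_dvd.mpr (dvd_trans hd this)).symm

/-- If `T_n^N(x) ≡ x (mod p^w)` then for every `i ≥ 1`,
`(T_n^{iN})'(x) ≡ (T_{n^N}'(x))^i (mod p)`. -/
theorem chebyshev_iterate_deriv_pow (p n N w : ℕ) (hp : p.Prime) (hn : 0 < n)
    (hN : 0 < N) (hw : 0 < w) (x : ℤ)
    (h : (T ℤ (n ^ N : ℕ)).eval x ≡ x [ZMOD p ^ w]) :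
    ∀ i : ℕ, 0 < i →
      (derivative (T ℤ (n ^ (i * N) : ℕ))).eval x ≡
        ((derivative (T ℤ (n ^ N : ℕ))).eval x) ^ i [ZMOD p] := by
  have hdvd : (p : ℤ) ∣ (p : ℤ) ^ w := dvd_pow_self _ hw.ne'
  -- fixed point mod p^w for all iterates
  have hfix : ∀ i : ℕ, (T ℤ (n ^ (i * N) : ℕ)).eval x ≡ x [ZMOD (p : ℤ) ^ w] := by
    intro i
    induction i with
    | zero => simp [Polynomial.Chebyshev.T_one]
    | succ i ih =>
      have hsplit : ((n ^ ((i + 1) * N) : ℕ) : ℤ) = ((n ^ N : ℕ) : ℤ) * ((n ^ (i * N) : ℕ) : ℤ) := by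
        push_cast
        rw [← pow_add, add_mul, one_mul, add_comm]
      rw [hsplit, Polynomial.Chebyshev.T_mul, Polynomial.eval_comp]
      calc (T ℤ (n ^ N : ℕ)).eval ((T ℤ (n ^ (i * N) : ℕ)).eval x)
          ≡ (T ℤ (n ^ N : ℕ)).eval x [ZMOD (p:ℤ)^w] := eval_modeq_of_modeq _ ih
        _ ≡ x [ZMOD (p:ℤ)^w] := by exact_mod_cast h
  intro i hi
  induction i with
  | zero => omega
  | succ i ih =>
    rcases Nat.eq_zero_or_pos i with hi0 | hi0
    · subst hi0; simp
    · have hsplit : ((n ^ ((i + 1) * N) : ℕ) : ℤ) = ((n ^ N : ℕ) : ℤ) * ((n ^ (i * N) : ℕ) : ℤ) := by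
        push_cast
        rw [← pow_add, add_mul, one_mul, add_comm]
      rw [hsplit, Polynomial.Chebyshev.T_mul]
      rw [Polynomial.derivative_comp, Polynomial.eval_mul, Polynomial.eval_comp]
      have h1 : (derivative (T ℤ (n ^ N : ℕ))).eval ((T ℤ (n ^ (i * N) : ℕ)).eval x)
          ≡ (derivative (T ℤ (n ^ N : ℕ))).eval x [ZMOD (p:ℤ)] := by
        have := eval_modeq_of_modeq (m := (p:ℤ)^w) (derivative (T ℤ (n ^ N : ℕ))) (hfix i)
        exact this.of_dvd hdvd
      have h2 := ih hi0
      calc (derivative (T ℤ (n ^ (i * N) : ℕ))).eval x *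
            (derivative (T ℤ (n ^ N : ℕ))).eval ((T ℤ (n ^ (i * N) : ℕ)).eval x)
          ≡ ((derivative (T ℤ (n ^ N : ℕ))).eval x) ^ i *
            (derivative (T ℤ (n ^ N : ℕ))).eval x [ZMOD (p:ℤ)] := h2.mul h1
        _ = ((derivative (T ℤ (n ^ N : ℕ))).eval x) ^ (i + 1) := by ring
end
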